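/- Let x be a decision node with remaining supply t and let P = (x^t, x^{t−1}, …, x^0) be a path from x. If for every s ∈ {1,…,t} and every buyer j we have f_j(x^s) < s, then the final allocation of P is fully efficient: SW(x^0_1 − x^t_1 | x) = OPT(x). Otherwise, letting t̄ = max{ s ∈ {1,…,t} : f_j(x^s) = s for some buyer j }, the efficiency of P is bounded below by the efficiency of its final subpath: SW(x^0_1 − x^t_1 | x)·OPT(x^{t̄}) ≥ SW(x^0_1 − x^{t̄}_1 | x^{t̄})·OPT(x). -/

import Mathlib

open Finset

noncomputable section

/-- The opponent of buyer `i`. -/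
def other (i : Fin 2) : Fin 2 := 1 - i

/-- The standard unit vector of buyer `i`: winning one item moves `x` to `x + e i`. -/
def e (i : Fin 2) : Fin 2 → ℕ := Pi.single i 1

/-- Remaining supply `t(x) = T - x₁ - x₂` at node `x`. -/
def supply (T : ℕ) (x : Fin 2 → ℕ) : ℕ := T - (x 0 + x 1)

/-- `x` is a decision node: `x₁ + x₂ < T`. -/
def IsDecision (T : ℕ) (x : Fin 2 → ℕ) : Prop := x 0 + x 1 < T

/-- Incremental value `v_i(k|x) = v_i(x_i + k)`. -/
def val (v : Fin 2 → ℕ → ℝ) (i : Fin 2) (k : ℕ) (x : Fin 2 → ℕ) : ℝ := v i (x i + k)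

/-- Valuations are nonnegative and weakly decreasing. -/
def Admissible (v : Fin 2 → ℕ → ℝ) : Prop := ∀ i k, 0 ≤ v i k ∧ v i (k + 1) ≤ v i k

/-- Greedy payoff `μ̄_i(k|x) = Σ_{j=1}^k v_i(j|x) - k · v_{-i}(t-k+1|x)`. -/
def gbar (T : ℕ) (v : Fin 2 → ℕ → ℝ) (i : Fin 2) (k : ℕ) (x : Fin 2 → ℕ) : ℝ :=
  (∑ j ∈ Finset.Icc 1 k, val v i j x) - (k : ℝ) * val v (other i) (supply T x - k + 1) x

/-- Greedy utility `μ_i(x) = max_{0 ≤ k ≤ t} μ̄_i(k|x)` (equal to `0` at terminal nodes). -/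
def gu (T : ℕ) (v : Fin 2 → ℕ → ℝ) (i : Fin 2) (x : Fin 2 → ℕ) : ℝ :=
  Finset.sup' (Finset.range (supply T x + 1)) ⟨0, by simp⟩
    (fun k => gbar T v i k x)

/-- Greedy demand `κ_i(x)`: the least `k ∈ {0,…,t}` attaining the greedy utility. -/
def gd (T : ℕ) (v : Fin 2 → ℕ → ℝ) (i : Fin 2) (x : Fin 2 → ℕ) : ℕ :=
  sInf {k | k ≤ supply T x ∧ gbar T v i k x = gu T v i x}

/-- Duopsony factor `f_i(x) = max ({k ∈ {1,…,t} : v_i(k|x) > v_{-i}(t-k+1|x)} ∪ {0})`. -/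
def df (T : ℕ) (v : Fin 2 → ℕ → ℝ) (i : Fin 2) (x : Fin 2 → ℕ) : ℕ :=
  sSup {k | 1 ≤ k ∧ k ≤ supply T x ∧
    val v (other i) (supply T x - k + 1) x < val v i k x}

/-- Baseline price `β_i(x)`. -/
def base (T : ℕ) (v : Fin 2 → ℕ → ℝ) (i : Fin 2) (x : Fin 2 → ℕ) : ℝ :=
  if df T v i x = 0 then val v i 1 x
  else val v (other i) (supply T x - gd T v i x + 1) x

/-- Threshold price `p_i(x) = v_i(1|x) + μ_i(x+e_i) - μ_i(x+e_{-i})`. -/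
def tp (T : ℕ) (v : Fin 2 → ℕ → ℝ) (i : Fin 2) (x : Fin 2 → ℕ) : ℝ :=
  val v i 1 x + gu T v i (x + e i) - gu T v i (x + e (other i))

/-- Social welfare of awarding `k` of the `t` remaining items to buyer 1. -/
def sw (T : ℕ) (v : Fin 2 → ℕ → ℝ) (k : ℕ) (x : Fin 2 → ℕ) : ℝ :=
  (∑ i ∈ Finset.Icc 1 k, val v 0 i x) + (∑ i ∈ Finset.Icc 1 (supply T x - k), val v 1 i x)

/-- Optimal social welfare `OPT(x) = max_{0 ≤ k ≤ t} SW(k|x)`. -/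
def opt (T : ℕ) (v : Fin 2 → ℕ → ℝ) (x : Fin 2 → ℕ) : ℝ :=
  Finset.sup' (Finset.range (supply T x + 1)) ⟨0, by simp⟩
    (fun k => sw T v k x)

/-!
The welfare `SW(k|y)` is unimodal in `k`: the increment from `k` to `k + 1` is
`v₁(k+1|y) - v₂(t-k|y)`, which by the definition of the duopsony factors is nonnegative for
`k < t - f₂(y)` and nonpositive for `k ≥ f₁(y)`. Since `f₁ + f₂ ≤ t`, every split `k` with
`f₁(y) ≤ k ≤ t - f₂(y)` is optimal.

Duopsony factors are stable under moving down the tree: if `f_i(y) < t(y)` at a node `y`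
after `x`, then `f_i(x) ≤ (y_i - x_i) + f_i(y)`. Applied at `x^{t̄+1}` (if `t̄ < t`) this gives
`f_i(x) ≤ (x^{t̄}_i - x_i) + t̄`, so some optimal split at `x` agrees with the path up to
`x^{t̄}`. Writing `C` for the welfare
of the items allocated between `x` and `x^{t̄}`, this yields `OPT(x) ≤ C + OPT(x^{t̄})`, while the
welfare of the path is `C + w` with `w` the welfare of its final subpath. The claim
`(C + w) · OPT(x^{t̄}) ≥ w · (C + OPT(x^{t̄}))` then reduces to `w ≤ OPT(x^{t̄})`. With `t̄`
replaced by `0` the same bound on the duopsony factors gives full efficiency.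
-/

@[simp] lemma other_zero : other 0 = 1 := rfl

@[simp] lemma other_one : other 1 = 0 := rfl

lemma e_apply_zero_add_e_apply_one (j : Fin 2) : e j 0 + e j 1 = 1 := by
  fin_cases j <;> simp [e]

namespace Admissible

variable {v : Fin 2 → ℕ → ℝ}

lemma antitone (hv : Admissible v) (i : Fin 2) : Antitone (v i) :=
  antitone_nat_of_succ_le fun n => (hv i n).2

lemma sum_val_nonneg (hv : Admissible v) (i : Fin 2) (n : ℕ) (y : Fin 2 → ℕ) :
    0 ≤ ∑ k ∈ Icc 1 n, val v i k y :=
  sum_nonneg fun _ _ => (hv i _).1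

lemma sw_nonneg (hv : Admissible v) (T k : ℕ) (y : Fin 2 → ℕ) : 0 ≤ sw T v k y :=
  add_nonneg (hv.sum_val_nonneg 0 _ y) (hv.sum_val_nonneg 1 _ y)

end Admissible

section DuopsonyFactor

variable {T : ℕ} {v : Fin 2 → ℕ → ℝ} {i : Fin 2} {y : Fin 2 → ℕ} {k : ℕ}

lemma bddAbove_df_set :
    BddAbove {k | 1 ≤ k ∧ k ≤ supply T y ∧
      val v (other i) (supply T y - k + 1) y < val v i k y} :=
  ⟨supply T y, fun _ h => h.2.1⟩

lemma df_le_supply : df T v i y ≤ supply T y := by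
  rcases Set.eq_empty_or_nonempty {k | 1 ≤ k ∧ k ≤ supply T y ∧
      val v (other i) (supply T y - k + 1) y < val v i k y} with h | h
  · simp only [df, h, csSup_empty, bot_eq_zero', zero_le]
  · exact csSup_le h fun _ hk => hk.2.1

lemma le_df (h1 : 1 ≤ k) (h2 : k ≤ supply T y)
    (h : val v (other i) (supply T y - k + 1) y < val v i k y) : k ≤ df T v i y :=
  le_csSup bddAbove_df_set ⟨h1, h2, h⟩

lemma val_le_of_df_lt (h1 : 1 ≤ k) (h2 : k ≤ supply T y) (h : df T v i y < k) :
    val v i k y ≤ val v (other i) (supply T y - k + 1) y :=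
  not_lt.mp fun hlt => (le_df h1 h2 hlt).not_gt h

lemma val_lt_of_le_df (hv : Admissible v) (h1 : 1 ≤ k) (hk : k ≤ df T v i y) :
    val v (other i) (supply T y - k + 1) y < val v i k y := by
  have hne : {k | 1 ≤ k ∧ k ≤ supply T y ∧
      val v (other i) (supply T y - k + 1) y < val v i k y}.Nonempty := by
    by_contra h
    simp only [df, Set.not_nonempty_iff_eq_empty.mp h, csSup_empty, bot_eq_zero'] at hk
    omega
  obtain ⟨-, hd, hlt⟩ := Nat.sSup_mem hne bddAbove_df_set
  calc val v (other i) (supply T y - k + 1) y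
      ≤ val v (other i) (supply T y - df T v i y + 1) y := hv.antitone _ (by omega)
    _ < val v i (df T v i y) y := hlt
    _ ≤ val v i k y := hv.antitone _ (by omega)

lemma df_zero_add_df_one_le (hv : Admissible v) : df T v 0 y + df T v 1 y ≤ supply T y := by
  by_contra! h
  have h0 : df T v 0 y ≤ supply T y := df_le_supply
  have h1 : df T v 1 y ≤ supply T y := df_le_supply
  have m0 := val_lt_of_le_df hv (i := 0) (k := df T v 0 y) (y := y) (by omega) le_rfl
  have m1 := val_lt_of_le_df hv (i := 1) (k := df T v 1 y) (y := y) (by omega) le_rfl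
  have e0 : val v 0 (df T v 0 y) y ≤ val v 0 (supply T y - df T v 1 y + 1) y :=
    hv.antitone _ (by omega)
  have e1 : val v 1 (df T v 1 y) y ≤ val v 1 (supply T y - df T v 0 y + 1) y :=
    hv.antitone _ (by omega)
  simp only [other_zero, other_one] at m0 m1
  linarith

end DuopsonyFactor

section Welfare

variable {T : ℕ} {v : Fin 2 → ℕ → ℝ} {y : Fin 2 → ℕ} {k : ℕ}

lemma sw_succ (hk : k < supply T y) :
    sw T v (k + 1) y = sw T v k y + val v 0 (k + 1) y - val v 1 (supply T y - k) y := by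
  obtain ⟨n, hn⟩ : ∃ n, supply T y - k = n + 1 := ⟨supply T y - (k + 1), by omega⟩
  have hn' : supply T y - (k + 1) = n := by omega
  simp only [sw, hn, hn', sum_Icc_succ_top (Nat.le_add_left 1 _)]
  ring

lemma monotoneOn_sw :
    MonotoneOn (fun k => sw T v k y) (Set.Iic (supply T y - df T v 1 y)) := by
  refine monotoneOn_of_le_succ Set.ordConnected_Iic fun k _ _ hk => ?_
  rw [Order.succ_eq_add_one, Set.mem_Iic] at *
  have h := val_le_of_df_lt (T := T) (i := 1) (k := supply T y - k) (y := y) (v := v)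
    (by omega) (by omega) (by omega)
  rw [other_one, show supply T y - (supply T y - k) + 1 = k + 1 by omega] at h
  rw [sw_succ (by omega)]
  linarith

lemma antitoneOn_sw :
    AntitoneOn (fun k => sw T v k y) (Set.Icc (df T v 0 y) (supply T y)) := by
  refine antitoneOn_of_succ_le Set.ordConnected_Icc fun k _ hk hk' => ?_
  rw [Order.succ_eq_add_one, Set.mem_Icc] at *
  have h := val_le_of_df_lt (T := T) (i := 0) (k := k + 1) (y := y) (v := v)
    (by omega) (by omega) (by omega)
  rw [other_zero, show supply T y - (k + 1) + 1 = supply T y - k by omega] at h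
  rw [sw_succ (by omega)]
  linarith

lemma sw_le_opt (hk : k ≤ supply T y) : sw T v k y ≤ opt T v y :=
  le_sup' (fun k => sw T v k y) (mem_range.mpr (Nat.lt_succ_of_le hk))

lemma sw_eq_opt_of_df_le (h0 : df T v 0 y ≤ k) (h1 : k ≤ supply T y - df T v 1 y) :
    sw T v k y = opt T v y := by
  refine le_antisymm (sw_le_opt (by omega)) (sup'_le _ _ fun j hj => ?_)
  rw [mem_range] at hj
  rcases le_total j k with h | h
  · exact monotoneOn_sw (Set.mem_Iic.mpr (by omega)) (Set.mem_Iic.mpr h1) h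
  · exact antitoneOn_sw ⟨h0, by omega⟩ ⟨h0.trans h, by omega⟩ h

end Welfare

lemma sum_Icc_one_add (f : ℕ → ℝ) (a k : ℕ) :
    ∑ i ∈ Icc 1 (a + k), f i = ∑ i ∈ Icc 1 a, f i + ∑ i ∈ Icc 1 k, f (a + i) := by
  induction k with
  | zero => simp
  | succ k ih =>
    rw [← add_assoc, sum_Icc_succ_top (by omega), ih,
      sum_Icc_succ_top (show 1 ≤ k + 1 by omega) fun i => f (a + i), add_assoc, add_assoc]

section Subnode

variable {T : ℕ} {v : Fin 2 → ℕ → ℝ} {x y : Fin 2 → ℕ}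

lemma supply_eq_add (hxy : x ≤ y) (hy : y 0 + y 1 ≤ T) (i : Fin 2) :
    supply T x = supply T y + (y i - x i) + (y (other i) - x (other i)) := by
  have h0 : x 0 ≤ y 0 := hxy 0
  have h1 : x 1 ≤ y 1 := hxy 1
  unfold supply
  match i with
  | 0 => rw [other_zero]; omega
  | 1 => rw [other_one]; omega

lemma val_sub_add {i : Fin 2} (h : x i ≤ y i) (k : ℕ) :
    val v i (y i - x i + k) x = val v i k y := by
  unfold _root_.val
  congr 1
  omega

lemma df_le_sub_add_df (hv : Admissible v) (hxy : x ≤ y) (hy : y 0 + y 1 ≤ T) {i : Fin 2}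
    (hlt : df T v i y < supply T y) : df T v i x ≤ y i - x i + df T v i y := by
  by_contra! hcon
  have hsupply := supply_eq_add hxy hy i
  have h := val_lt_of_le_df (T := T) (y := x) (i := i) hv (k := y i - x i + (df T v i y + 1))
    (by omega) (by omega)
  rw [val_sub_add (v := v) (hxy i), show supply T x - (y i - x i + (df T v i y + 1)) + 1
      = y (other i) - x (other i) + (supply T y - (df T v i y + 1) + 1) by omega,
    val_sub_add (v := v) (hxy (other i))] at h
  have := le_df (by omega) hlt h
  omega

lemma sw_sub_add (hxy : x ≤ y) (hy : y 0 + y 1 ≤ T) {k : ℕ} (hk : k ≤ supply T y) :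
    sw T v (y 0 - x 0 + k) x = ∑ j ∈ Icc 1 (y 0 - x 0), val v 0 j x
      + ∑ j ∈ Icc 1 (y 1 - x 1), val v 1 j x + sw T v k y := by
  have hsupply := supply_eq_add hxy hy 0
  rw [other_zero] at hsupply
  rw [sw, sw, show supply T x - (y 0 - x 0 + k) = y 1 - x 1 + (supply T y - k) by omega,
    sum_Icc_one_add, sum_Icc_one_add]
  simp only [val_sub_add (hxy 0), val_sub_add (hxy 1)]
  ring

lemma opt_le_add_opt (hv : Admissible v) (hxy : x ≤ y) (hy : y 0 + y 1 ≤ T)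
    (hdf : ∀ i, df T v i x ≤ y i - x i + supply T y) :
    opt T v x ≤ ∑ j ∈ Icc 1 (y 0 - x 0), val v 0 j x
      + ∑ j ∈ Icc 1 (y 1 - x 1), val v 1 j x + opt T v y := by
  have hsupply := supply_eq_add hxy hy 0
  rw [other_zero] at hsupply
  have hsum := df_zero_add_df_one_le (T := T) (y := x) hv
  have h0 := hdf 0
  have h1 := hdf 1
  -- an optimal split at `x` that extends the allocation made between `x` and `y`
  set m := max (df T v 0 x) (y 0 - x 0)
  rw [← sw_eq_opt_of_df_le (k := m) (le_max_left _ _) (max_le (by omega) (by omega)),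
    show m = y 0 - x 0 + (m - (y 0 - x 0)) by omega, sw_sub_add hxy hy (by omega)]
  exact add_le_add le_rfl (sw_le_opt (T := T) (v := v) (y := y) (k := m - (y 0 - x 0)) (by omega))

lemma sw_mul_opt_le {z : Fin 2 → ℕ} (hv : Admissible v) (hxy : x ≤ y) (hyz : y ≤ z)
    (hz : z 0 + z 1 = T) (hdf : ∀ i, df T v i x ≤ y i - x i + supply T y) :
    sw T v (z 0 - y 0) y * opt T v x ≤ sw T v (z 0 - x 0) x * opt T v y := by
  have hxy0 : x 0 ≤ y 0 := hxy 0
  have hyz0 : y 0 ≤ z 0 := hyz 0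
  have hyz1 : y 1 ≤ z 1 := hyz 1
  have hy : y 0 + y 1 ≤ T := by omega
  have hopt := opt_le_add_opt hv hxy hy hdf
  have hzy : z 0 - y 0 ≤ supply T y := by unfold supply; omega
  have hw := sw_le_opt (v := v) hzy
  rw [show z 0 - x 0 = y 0 - x 0 + (z 0 - y 0) by omega, sw_sub_add hxy hy hzy]
  have hC := add_nonneg (hv.sum_val_nonneg 0 (y 0 - x 0) x) (hv.sum_val_nonneg 1 (y 1 - x 1) x)
  nlinarith [mul_le_mul_of_nonneg_left hopt (hv.sw_nonneg T (z 0 - y 0) y),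
    mul_le_mul_of_nonneg_left hw hC]

lemma sw_eq_opt_of_df_le_sub {z : Fin 2 → ℕ} (hxz : x ≤ z) (hz : z 0 + z 1 = T)
    (hdf : ∀ i, df T v i x ≤ z i - x i) : sw T v (z 0 - x 0) x = opt T v x := by
  have hsupply := supply_eq_add hxz hz.le 0
  have hz0 : supply T z = 0 := by unfold supply; omega
  have h1 := hdf 1
  rw [other_zero, hz0] at hsupply
  exact sw_eq_opt_of_df_le (hdf 0) (by omega)

end Subnode

def IsPath (t : ℕ) (P : ℕ → Fin 2 → ℕ) : Prop :=
  ∀ s, 1 ≤ s → s ≤ t → ∃ j, P (s - 1) = P s + e j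

section Path

variable {P : ℕ → Fin 2 → ℕ} {t : ℕ}

lemma IsPath.succ (hP : IsPath t P) {s : ℕ} (hs : s < t) :
    P (s + 1) ≤ P s ∧ P s 0 + P s 1 = P (s + 1) 0 + P (s + 1) 1 + 1 := by
  obtain ⟨j, hj⟩ := hP (s + 1) (by omega) hs
  rw [Nat.add_sub_cancel] at hj
  have he := e_apply_zero_add_e_apply_one j
  refine ⟨hj ▸ fun i => Nat.le_add_right _ _, ?_⟩
  rw [hj, Pi.add_apply, Pi.add_apply]
  omega

lemma IsPath.antitone (hP : IsPath t P) {s' s : ℕ} (h : s' ≤ s) (hs : s ≤ t) : P s ≤ P s' := by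
  induction s, h using Nat.le_induction with
  | base => exact le_rfl
  | succ n _ ih => exact (hP.succ hs).1.trans (ih (by omega))

lemma IsPath.coord_sum (hP : IsPath t P) {s : ℕ} (hs : s ≤ t) :
    P s 0 + P s 1 + s = P t 0 + P t 1 + t := by
  suffices ∀ n, s ≤ n → n ≤ t → P s 0 + P s 1 + s = P n 0 + P n 1 + n from this t hs le_rfl
  intro n h
  induction n, h using Nat.le_induction with
  | base => exact fun _ => rfl
  | succ n _ ih =>
    intro hn
    have := (hP.succ hn).2
    have := ih (by omega)
    omega

variable {T : ℕ} {v : Fin 2 → ℕ → ℝ} {x : Fin 2 → ℕ}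

lemma IsPath.df_le_sub_add_supply (hP : IsPath t P) (hv : Admissible v) (hPt : P t = x)
    (hsupply : ∀ s ≤ t, P s 0 + P s 1 + s = T) {r : ℕ} (hr : r ≤ t)
    (hlt : ∀ s, r < s → s ≤ t → ∀ j, df T v j (P s) < s) (i : Fin 2) :
    df T v i x ≤ P r i - x i + supply T (P r) := by
  have hsupp : ∀ s ≤ t, supply T (P s) = s := fun s hs => by
    have := hsupply s hs; unfold supply; omega
  rcases hr.eq_or_lt with rfl | hr
  · rw [hPt, Nat.sub_self, zero_add]
    exact df_le_supply
  · have hxy : x ≤ P (r + 1) := hPt ▸ hP.antitone (by omega) le_rfl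
    have hy : P (r + 1) 0 + P (r + 1) 1 ≤ T := by have := hsupply (r + 1) hr; omega
    have h := df_le_sub_add_df hv hxy hy (i := i)
      (by rw [hsupp _ hr]; exact hlt _ (by omega) hr i)
    have := hlt (r + 1) (by omega) hr i
    have : P (r + 1) i ≤ P r i := (hP.succ hr).1 i
    have : x i ≤ P (r + 1) i := hxy i
    rw [hsupp r hr.le]
    omega

end Path

/-- Efficiency along a path: either full efficiency, or the efficiency is bounded
below by the efficiency of the final subpath starting at the last node where some
buyer is a strict monopsonist. -/
theorem stmt15 (T : ℕ) (v : Fin 2 → ℕ → ℝ) (hv : Admissible v)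
    (x : Fin 2 → ℕ) (hx : IsDecision T x)
    (P : ℕ → (Fin 2 → ℕ))
    (hPtop : P (supply T x) = x)
    (hPstep : ∀ s, 1 ≤ s → s ≤ supply T x → ∃ j : Fin 2, P (s - 1) = P s + e j) :
    ((∀ s, 1 ≤ s → s ≤ supply T x → ∀ j : Fin 2, df T v j (P s) < s) →
      sw T v (P 0 0 - x 0) x = opt T v x) ∧
    ((∃ s, 1 ≤ s ∧ s ≤ supply T x ∧ ∃ j : Fin 2, df T v j (P s) = s) →
      sw T v (P 0 0 - P (sSup {s | 1 ≤ s ∧ s ≤ supply T x ∧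
            ∃ j : Fin 2, df T v j (P s) = s}) 0)
          (P (sSup {s | 1 ≤ s ∧ s ≤ supply T x ∧ ∃ j : Fin 2, df T v j (P s) = s}))
        * opt T v x
      ≤ sw T v (P 0 0 - x 0) x
        * opt T v (P (sSup {s | 1 ≤ s ∧ s ≤ supply T x ∧
            ∃ j : Fin 2, df T v j (P s) = s}))) := by
  have hP : IsPath (supply T x) P := hPstep
  have hsupply : ∀ s ≤ supply T x, P s 0 + P s 1 + s = T := fun s hs => by
    have := hP.coord_sum hs
    rw [hPtop] at this
    unfold IsDecision at hx
    unfold supply at *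
    omega
  have hxP : ∀ s ≤ supply T x, x ≤ P s := fun s hs => hPtop ▸ hP.antitone hs le_rfl
  have hend : P 0 0 + P 0 1 = T := hsupply 0 (Nat.zero_le _)
  have hsupp0 : supply T (P 0) = 0 := by unfold supply; omega
  refine ⟨fun hlt => sw_eq_opt_of_df_le_sub (hxP 0 (Nat.zero_le _)) hend fun i => ?_, fun hex => ?_⟩
  · simpa [hsupp0] using
      hP.df_le_sub_add_supply hv hPtop hsupply (Nat.zero_le _) hlt i
  · set S := {s | 1 ≤ s ∧ s ≤ supply T x ∧ ∃ j : Fin 2, df T v j (P s) = s}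
    have hbdd : BddAbove S := ⟨supply T x, fun _ hs => hs.2.1⟩
    obtain ⟨-, hr, -⟩ := Nat.sSup_mem hex hbdd
    have hlt : ∀ s, sSup S < s → s ≤ supply T x → ∀ j, df T v j (P s) < s := by
      intro s hs hst j
      have hne : df T v j (P s) ≠ s := fun h =>
        (le_csSup hbdd ⟨by omega, hst, j, h⟩).not_gt hs
      have : df T v j (P s) ≤ s := by
        have := hsupply s hst
        exact df_le_supply.trans (by unfold supply; omega)
      omega
    exact sw_mul_opt_le hv (hxP _ hr) (hP.antitone (Nat.zero_le _) hr) hend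
      (hP.df_le_sub_add_supply hv hPtop hsupply hr hlt)
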